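/- arXiv:1606.01977 — 5 statements merged into one kernel-verified Lean document; each statement's English description precedes it below -/
import Mathlib

section
/- Let k be a field and let k[x,y,z] be the polynomial ring in three variables over k. Then the intersection of ideals (x, y²) ∩ (x², z) ∩ (y, z²) equals the ideal (x·y·z, x²·y, y²·z, z²·x). -/
/-!
All four ideals are monomial ideals. A polynomial lies in a monomial ideal iff each exponent
vector of its support dominates that of a generator, and the intersection of two monomial ideals
is generated by the lcms (exponentwise maxima) of pairs of generators. So the identity reduces to
an equivalence of linear conditions on the exponent vector `m ∈ ℕ³`, which `omega` decides.
-/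

open MvPolynomial

theorem Set.exists_mem_image2_sup_le_iff {α : Type*} [SemilatticeSup α] {S T : Set α} {m : α} :
    (∃ u ∈ Set.image2 (· ⊔ ·) S T, u ≤ m) ↔ (∃ s ∈ S, s ≤ m) ∧ ∃ t ∈ T, t ≤ m := by
  simp only [Set.exists_mem_image2, sup_le_iff]
  exact ⟨fun ⟨s, hs, t, ht, hsm, htm⟩ => ⟨⟨s, hs, hsm⟩, t, ht, htm⟩,
    fun ⟨⟨s, hs, hsm⟩, t, ht, htm⟩ => ⟨s, hs, t, ht, hsm, htm⟩⟩

namespace MvPolynomial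

section MonomialIdeal

variable {σ R : Type*} [CommSemiring R]

theorem span_monomial_image_inf_span_monomial_image (S T : Set (σ →₀ ℕ)) :
    Ideal.span ((fun s => monomial s (1 : R)) '' S) ⊓ Ideal.span ((fun s => monomial s 1) '' T) =
      Ideal.span ((fun s => monomial s 1) '' Set.image2 (· ⊔ ·) S T) := by
  ext f
  simp only [Ideal.mem_inf, mem_ideal_span_monomial_image, Set.exists_mem_image2_sup_le_iff,
    imp_and, forall_and]

theorem span_monomial_image_eq_of_exists_le_iff {S T : Set (σ →₀ ℕ)}
    (h : ∀ m, (∃ s ∈ S, s ≤ m) ↔ ∃ t ∈ T, t ≤ m) :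
    Ideal.span ((fun s => monomial s (1 : R)) '' S) = Ideal.span ((fun s => monomial s 1) '' T) := by
  ext f
  simp only [mem_ideal_span_monomial_image, h]

end MonomialIdeal

noncomputable def exponent3 (a b c : ℕ) : Fin 3 →₀ ℕ :=
  Finsupp.single 0 a + Finsupp.single 1 b + Finsupp.single 2 c

theorem monomial_exponent3 {R : Type*} [CommSemiring R] (a b c : ℕ) :
    monomial (exponent3 a b c) (1 : R) = X 0 ^ a * X 1 ^ b * X 2 ^ c := by
  rw [exponent3, monomial_add_single, monomial_add_single, ← X_pow_eq_monomial]

theorem exponent3_le_iff {a b c : ℕ} {m : Fin 3 →₀ ℕ} :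
    exponent3 a b c ≤ m ↔ a ≤ m 0 ∧ b ≤ m 1 ∧ c ≤ m 2 := by
  simp [exponent3, Finsupp.le_def, Fin.forall_fin_succ]

end MvPolynomial

/-- In `k[x,y,z]`, `(x, y²) ∩ (x², z) ∩ (y, z²) = (xyz, x²y, y²z, z²x)`. -/
theorem stmt_4 (k : Type*) [Field k] :
    (Ideal.span {(X 0 : MvPolynomial (Fin 3) k), X 1 ^ 2} ⊓
        Ideal.span {(X 0 : MvPolynomial (Fin 3) k) ^ 2, X 2} ⊓
        Ideal.span {(X 1 : MvPolynomial (Fin 3) k), X 2 ^ 2}) =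
      Ideal.span {(X 0 : MvPolynomial (Fin 3) k) * X 1 * X 2, X 0 ^ 2 * X 1,
        X 1 ^ 2 * X 2, X 2 ^ 2 * X 0} := by
  let mon : (Fin 3 →₀ ℕ) → MvPolynomial (Fin 3) k := fun s => monomial s 1
  calc _ = Ideal.span (mon '' {exponent3 1 0 0, exponent3 0 2 0}) ⊓
        Ideal.span (mon '' {exponent3 2 0 0, exponent3 0 0 1}) ⊓
        Ideal.span (mon '' {exponent3 0 1 0, exponent3 0 0 2}) := by
        simp [mon, Set.image_insert_eq, monomial_exponent3]
    _ = Ideal.span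
          (mon '' {exponent3 1 1 1, exponent3 2 1 0, exponent3 0 2 1, exponent3 1 0 2}) := by
        rw [span_monomial_image_inf_span_monomial_image,
          span_monomial_image_inf_span_monomial_image]
        refine span_monomial_image_eq_of_exists_le_iff fun m => ?_
        simp only [Set.exists_mem_image2_sup_le_iff, Set.exists_mem_insert,
          Set.mem_singleton_iff, exists_eq_left, exponent3_le_iff]
        omega
    _ = _ := by
        rw [mul_comm (X 2 ^ 2) (X 0)]
        simp [mon, Set.image_insert_eq, monomial_exponent3]
end

section
/- Let k be a field and S = k[x,y,z] the polynomial ring in three variables. Consider the S-module homomorphism φ : S⁴ → S sending (f₁,f₂,f₃,f₄) to f₁·xyz + f₂·x²y + f₃·y²z + f₄·z²x. Then the kernel of φ is the S-submodule of S⁴ generated by the three vectors (x, −z, 0, 0), (y, 0, −x, 0), and (z, 0, 0, −y). -/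
/-!
Reading the relation `v₀·xyz + v₁·x²y + v₂·y²z + v₃·z²x = 0` modulo `z`, `x` and `y` in turn shows
`z ∣ v₁`, `x ∣ v₂` and `y ∣ v₃`, since each variable is prime and divides every monomial of the
relation except one. Subtracting the matching multiples of the three syzygies leaves a vector
`(w, 0, 0, 0)` with `w·xyz = 0`, hence `w = 0`.
-/

open MvPolynomial

namespace MvPolynomial

variable {σ R : Type*} [CommRing R] [IsDomain R]

theorem X_dvd_of_X_dvd_mul_X_pow_mul_X {i j l : σ} {m : ℕ} {f : MvPolynomial σ R}
    (hj : i ≠ j) (hl : i ≠ l) (h : X i ∣ f * (X j ^ m * X l)) : X i ∣ f := by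
  refine (X_prime.dvd_or_dvd h).resolve_right fun h' => ?_
  rcases X_prime.dvd_or_dvd h' with h' | h'
  · exact hj (X_dvd_X.mp (X_prime.dvd_of_dvd_pow h'))
  · exact hl (X_dvd_X.mp h')

theorem exists_eq_syzygy_combination {v : Fin 4 → MvPolynomial (Fin 3) R}
    (hv : v 0 * (X 0 * X 1 * X 2) + v 1 * (X 0 ^ 2 * X 1) +
      v 2 * (X 1 ^ 2 * X 2) + v 3 * (X 2 ^ 2 * X 0) = 0) :
    ∃ a b c : MvPolynomial (Fin 3) R,
      a • ![X 0, -X 2, 0, 0] + b • ![X 1, 0, -X 0, 0] + c • ![X 2, 0, 0, -X 1] = v := by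
  obtain ⟨a, ha⟩ : X 2 ∣ v 1 := X_dvd_of_X_dvd_mul_X_pow_mul_X (j := 0) (m := 2) (l := 1)
    (by decide) (by decide)
    ⟨-(v 0 * (X 0 * X 1) + v 2 * X 1 ^ 2 + v 3 * (X 2 * X 0)), by linear_combination hv⟩
  obtain ⟨b, hb⟩ : X 0 ∣ v 2 := X_dvd_of_X_dvd_mul_X_pow_mul_X (j := 1) (m := 2) (l := 2)
    (by decide) (by decide)
    ⟨-(v 0 * (X 1 * X 2) + v 1 * (X 0 * X 1) + v 3 * X 2 ^ 2), by linear_combination hv⟩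
  obtain ⟨c, hc⟩ : X 1 ∣ v 3 := X_dvd_of_X_dvd_mul_X_pow_mul_X (j := 2) (m := 2) (l := 0)
    (by decide) (by decide)
    ⟨-(v 0 * (X 0 * X 2) + v 1 * X 0 ^ 2 + v 2 * (X 1 * X 2)), by linear_combination hv⟩
  have hv0 : v 0 = -(a * X 0 + b * X 1 + c * X 2) := by
    have hxyz : (X 0 * X 1 * X 2 : MvPolynomial (Fin 3) R) ≠ 0 := by simp [X_ne_zero]
    refine mul_left_cancel₀ hxyz ?_
    rw [ha, hb, hc] at hv
    linear_combination hv
  refine ⟨-a, -b, -c, ?_⟩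
  ext i : 1
  fin_cases i <;>
    simp only [Fin.reduceFinMk, Pi.add_apply, Pi.smul_apply, smul_eq_mul, Matrix.cons_val,
      hv0, ha, hb, hc] <;> ring

end MvPolynomial

/-- Let `S = k[x,y,z]` and let `φ : S⁴ → S` be the `S`-linear map sending `(f₁,f₂,f₃,f₄)` to
`f₁·xyz + f₂·x²y + f₃·y²z + f₄·z²x`. Then `ker φ` is the `S`-submodule of `S⁴` generated by
`(x, −z, 0, 0)`, `(y, 0, −x, 0)` and `(z, 0, 0, −y)`. -/
theorem stmt_5 (k : Type*) [Field k]
    (φ : (Fin 4 → MvPolynomial (Fin 3) k) →ₗ[MvPolynomial (Fin 3) k] MvPolynomial (Fin 3) k)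
    (hφ : ∀ v : Fin 4 → MvPolynomial (Fin 3) k,
      φ v = v 0 * (X 0 * X 1 * X 2) + v 1 * (X 0 ^ 2 * X 1) +
        v 2 * (X 1 ^ 2 * X 2) + v 3 * (X 2 ^ 2 * X 0)) :
    LinearMap.ker φ =
      Submodule.span (MvPolynomial (Fin 3) k)
        {![X 0, -X 2, 0, 0], ![X 1, 0, -X 0, 0], ![X 2, 0, 0, -X 1]} := by
  ext v
  rw [LinearMap.mem_ker, hφ, Submodule.mem_span_triple]
  refine ⟨exists_eq_syzygy_combination, ?_⟩
  rintro ⟨a, b, c, rfl⟩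
  simp only [Pi.add_apply, Pi.smul_apply, smul_eq_mul, Matrix.cons_val]
  ring
end

section
/- Let k be a field, r ≥ 1, and let a₁, …, a_r ∈ k be pairwise distinct. Then in the polynomial ring k[x,y,z], the intersection of ideals (x, y) ∩ ⋂_{j=1}^{r} (z, x + a_j·y) equals the ideal (x·z, y·z, ∏_{j=1}^{r} (x + a_j·y)). -/
open MvPolynomial

/-!
Write `f = f(x, y, 0) + z·w`. If `f` lies in every `(z, x + a_j y)`, then each of the pairwise
non-associated primes `x + a_j y` divides `f(x, y, 0)`, hence so does their product. If moreover
`f ∈ (x, y)`, then `z·w ∈ (x, y)`; as `(x, y)` is a monomial ideal in variables other than `z`,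
this forces `w ∈ (x, y)`, i.e. `z·w ∈ (xz, yz)`.
-/

namespace MvPolynomial

variable {σ R : Type*}

theorem sub_aeval_mem [CommRing R] (I : Ideal (MvPolynomial σ R)) {g : σ → MvPolynomial σ R}
    (hg : ∀ i, X i - g i ∈ I) (f : MvPolynomial σ R) : f - aeval g f ∈ I := by
  rw [← Ideal.Quotient.eq]
  have : Ideal.Quotient.mkₐ R I = (Ideal.Quotient.mkₐ R I).comp (aeval g) :=
    algHom_ext fun i => by simpa [Ideal.Quotient.eq] using hg i
  exact DFunLike.congr_fun this f

theorem mem_span_X_image_of_X_mul_mem [CommSemiring R] {s : Set σ} {i : σ} (hi : i ∉ s)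
    {w : MvPolynomial σ R} (h : X i * w ∈ Ideal.span (X '' s)) : w ∈ Ideal.span (X '' s) := by
  rw [mem_ideal_span_X_image] at h ⊢
  intro m hm
  obtain ⟨j, hj, hmj⟩ := h (Finsupp.single i 1 + m)
    (by rwa [mem_support_iff, coeff_X_mul, ← mem_support_iff])
  refine ⟨j, hj, ?_⟩
  simpa [Finsupp.single_apply, ne_of_mem_of_not_mem hj hi |>.symm] using hmj

variable [CommRing R]

noncomputable def transvection [DecidableEq σ] {i j : σ} (hij : i ≠ j) (c : R) :
    MvPolynomial σ R ≃ₐ[R] MvPolynomial σ R :=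
  AlgEquiv.ofAlgHom
    (aeval (Function.update X i (X i + C c * X j)))
    (aeval (Function.update X i (X i - C c * X j)))
    (algHom_ext fun l => by
      by_cases hl : l = i
      · subst hl; simp [hij.symm]
      · simp [hl])
    (algHom_ext fun l => by
      by_cases hl : l = i
      · subst hl; simp [hij.symm]
      · simp [hl])

theorem prime_X_add_C_mul_X [IsDomain R] {i j : σ} (hij : i ≠ j) (c : R) :
    Prime (X i + C c * X j : MvPolynomial σ R) := by
  classical
  have := (MulEquiv.prime_iff (transvection hij c).toMulEquiv).mpr (X_prime (i := i))
  simpa [transvection, hij.symm] using this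

theorem X_add_C_mul_X_dvd_iff {i j : σ} (hij : i ≠ j) (c d : R) :
    (X i + C c * X j : MvPolynomial σ R) ∣ X i + C d * X j ↔ c = d := by
  classical
  refine ⟨fun ⟨q, hq⟩ => ?_, fun h => h ▸ dvd_rfl⟩
  have := congrArg (eval (Function.update 1 i (-c))) hq
  simp [hij.symm] at this
  linear_combination -this

theorem prod_X_add_C_mul_X_dvd [IsDomain R] [DecompositionMonoid (MvPolynomial σ R)]
    {ι : Type*} [Fintype ι] {a : ι → R} (ha : Function.Injective a) {i j : σ} (hij : i ≠ j)
    {f : MvPolynomial σ R} (h : ∀ l, X i + C (a l) * X j ∣ f) :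
    ∏ l, (X i + C (a l) * X j) ∣ f :=
  Fintype.prod_dvd_of_isRelPrime (fun l m hlm =>
    (prime_X_add_C_mul_X hij (a l)).irreducible.isRelPrime_iff_not_dvd.mpr
      (by rw [X_add_C_mul_X_dvd_iff hij]; exact ha.ne hlm)) h

end MvPolynomial

theorem pinwheel_mem_of_mem_inf {k : Type*} [Field k] {r : ℕ} {a : Fin r → k}
    (ha : Function.Injective a) {f : MvPolynomial (Fin 3) k}
    (hxy : f ∈ Ideal.span {X 0, X 1})
    (hlines : ∀ j, f ∈ Ideal.span {X 2, X 0 + C (a j) * X 1}) :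
    f ∈ Ideal.span {X 0 * X 2, X 1 * X 2, ∏ j : Fin r, (X 0 + C (a j) * X 1)} := by
  set φ : MvPolynomial (Fin 3) k →ₐ[k] MvPolynomial (Fin 3) k := aeval (Function.update X 2 0)
  have hφ_mem {S : Set (MvPolynomial (Fin 3) k)} (hS : f ∈ Ideal.span S) :
      φ f ∈ Ideal.span (φ '' S) := by
    rw [← Ideal.map_span]; exact Ideal.mem_map_of_mem φ hS
  obtain ⟨w, hw⟩ : X 2 ∣ f - φ f := by
    rw [← Ideal.mem_span_singleton]
    refine sub_aeval_mem _ (fun i => ?_) f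
    fin_cases i <;> simp
  obtain ⟨g, hg⟩ : ∏ j : Fin r, (X 0 + C (a j) * X 1) ∣ φ f := by
    refine prod_X_add_C_mul_X_dvd ha (by decide) fun j => ?_
    simpa [Set.image_pair, φ, Ideal.mem_span_singleton] using hφ_mem (hlines j)
  have hw_mem : w ∈ Ideal.span {X 0, X 1} := by
    have h_φf : φ f ∈ Ideal.span {X 0, X 1} := by simpa [Set.image_pair, φ] using hφ_mem hxy
    rw [← Set.image_pair] at h_φf hxy ⊢
    refine mem_span_X_image_of_X_mul_mem (i := 2) (by decide) ?_
    rw [← hw]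
    exact Ideal.sub_mem _ hxy h_φf
  obtain ⟨α, β, rfl⟩ := Ideal.mem_span_pair.mp hw_mem
  rw [show f = α * (X 0 * X 2) + β * (X 1 * X 2) + g * ∏ j : Fin r, (X 0 + C (a j) * X 1) by
    linear_combination hw + hg]
  refine add_mem (add_mem ?_ ?_) ?_ <;> exact Ideal.mul_mem_left _ _ (Ideal.subset_span (by simp))

theorem pinwheel_span_le_inf {k : Type*} [Field k] {r : ℕ} (hr : 1 ≤ r) (a : Fin r → k) :
    Ideal.span {X 0 * X 2, X 1 * X 2, ∏ j : Fin r, (X 0 + C (a j) * X 1)} ≤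
      Ideal.span {(X 0 : MvPolynomial (Fin 3) k), X 1} ⊓
        ⨅ j : Fin r, Ideal.span {X 2, X 0 + C (a j) * X 1} := by
  have hprod_dvd (j : Fin r) :=
    Finset.dvd_prod_of_mem (fun j => (X 0 + C (a j) * X 1 : MvPolynomial (Fin 3) k))
      (Finset.mem_univ j)
  have hline_mem :
      X 0 + C (a ⟨0, hr⟩) * X 1 ∈ Ideal.span {(X 0 : MvPolynomial (Fin 3) k), X 1} :=
    add_mem (Ideal.subset_span (by simp)) (Ideal.mul_mem_left _ _ (Ideal.subset_span (by simp)))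
  simp only [Ideal.span_le, Set.insert_subset_iff, Set.singleton_subset_iff, SetLike.mem_coe,
    Ideal.mem_inf, Ideal.mem_iInf]
  refine ⟨⟨?_, fun j => ?_⟩, ⟨?_, fun j => ?_⟩,
    Ideal.mem_of_dvd _ (hprod_dvd _) hline_mem,
    fun j => Ideal.mem_of_dvd _ (hprod_dvd j) (Ideal.subset_span (by simp))⟩
  iterate 2
    · exact Ideal.mul_mem_right _ _ (Ideal.subset_span (by simp))
    · exact Ideal.mul_mem_left _ _ (Ideal.subset_span (by simp))

/-- In `k[x,y,z]`, for pairwise distinct `a₁, …, a_r ∈ k` with `r ≥ 1`,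
`(x,y) ∩ ⋂_{j} (z, x + a_j y) = (xz, yz, ∏_j (x + a_j y))`. -/
theorem stmt_7 (k : Type*) [Field k] (r : ℕ) (hr : 1 ≤ r) (a : Fin r → k)
    (ha : Function.Injective a) :
    (Ideal.span {(X 0 : MvPolynomial (Fin 3) k), X 1} ⊓
        ⨅ j : Fin r, Ideal.span {(X 2 : MvPolynomial (Fin 3) k), X 0 + C (a j) * X 1}) =
      Ideal.span {(X 0 : MvPolynomial (Fin 3) k) * X 2, X 1 * X 2,
        ∏ j : Fin r, (X 0 + C (a j) * X 1)} := by
  refine le_antisymm (fun f hf => ?_) (pinwheel_span_le_inf hr a)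
  rw [Ideal.mem_inf, Ideal.mem_iInf] at hf
  exact pinwheel_mem_of_mem_inf ha hf.1 hf.2
end

section
/- Let d > 1 and let r be a natural number with (d+1)d/2 ≤ r < (d+2)(d+1)/2. Then there exist vectors v₁, …, v_r ∈ ℂ³, each nonzero and pairwise non-proportional, and a homogeneous polynomial F of degree d in ℂ[x₀,x₁,x₂], such that: (i) F(v_i) = 0 for all i; (ii) the only common zero in ℂ³ of the three partial derivatives ∂F/∂x₀, ∂F/∂x₁, ∂F/∂x₂ is the origin (i.e. F defines a smooth plane curve of degree d); and (iii) the only homogeneous polynomial of degree d−1 vanishing at all the v_i is the zero polynomial. -/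
/-!
The Fermat curve `x₀ᵈ + x₁ᵈ + x₂ᵈ = 0` is smooth in characteristic zero. For each `k` the line
`x₁ = k x₀` meets it in the `d` distinct points `(1, k, ζʲ wₖ)`, where `ζ` is a primitive `d`-th
root of unity and `wₖᵈ = -(1 + kᵈ)`. Take `k + 1` of these points on the line `x₁ = k x₀` for
each `k < d`, which is `d(d+1)/2` points, and the remaining `r - d(d+1)/2 ≤ d` points on the line
`x₁ = d x₀`. A form of degree `d - 1` through all of them vanishes by the staircase argument:
after dehomogenizing, it has `d` zeros on the line `x₁ = (d - 1) x₀`, so that line divides it, and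
the quotient, of degree `d - 2`, vanishes at the points on the lines `x₁ = k x₀` with `k < d - 1`.
-/

open MvPolynomial

namespace MvPolynomial

theorem eval_aeval {σ τ R : Type*} [CommSemiring R] (x : τ → R) (f : σ → MvPolynomial τ R)
    (p : MvPolynomial σ R) : eval x (aeval f p) = eval (fun i => eval x (f i)) p := by
  rw [aeval_eq_bind₁]
  exact eval₂Hom_bind₁ _ _ _ _

theorem totalDegree_aeval_le {σ τ R : Type*} [CommSemiring R] {f : σ → MvPolynomial τ R}
    (hf : ∀ i, (f i).totalDegree ≤ 1) (p : MvPolynomial σ R) :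
    (aeval f p).totalDegree ≤ p.totalDegree := by
  conv_lhs => rw [p.as_sum, map_sum]
  refine (totalDegree_finsetSum _ _).trans (Finset.sup_le fun u hu => ?_)
  rw [aeval_monomial, ← Algebra.smul_def]
  calc _ ≤ (u.prod fun i k => f i ^ k).totalDegree := totalDegree_smul_le _ _
    _ ≤ ∑ i ∈ u.support, (f i ^ u i).totalDegree := totalDegree_finsetProd _ _
    _ ≤ ∑ i ∈ u.support, u i := Finset.sum_le_sum fun i _ =>
        (totalDegree_pow _ _).trans (by simpa using Nat.mul_le_mul_left (u i) (hf i))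
    _ ≤ p.totalDegree := le_totalDegree hu

theorem totalDegree_X_sub_C {σ R : Type*} [CommRing R] [Nontrivial R] (i : σ) (a : R) :
    (X i - C a).totalDegree = 1 := by
  rw [sub_eq_add_neg, ← C_neg, totalDegree_add_eq_left_of_totalDegree_lt] <;> simp [totalDegree_X]

section Restriction

variable {σ R : Type*} [CommRing R] [DecidableEq σ] (i : σ) (a : R) (p : MvPolynomial σ R)

theorem X_sub_C_dvd_sub_aeval_update :
    X i - C a ∣ p - aeval (Function.update X i (C a)) p := by
  rw [← Ideal.mem_span_singleton, ← Ideal.Quotient.eq]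
  suffices (Ideal.Quotient.mkₐ R _).comp (aeval (Function.update X i (C a))) =
      Ideal.Quotient.mkₐ R (Ideal.span {X i - C a}) from (AlgHom.congr_fun this p).symm
  ext j
  rcases eq_or_ne j i with rfl | hj
  · simpa using (Ideal.Quotient.eq.mpr (Ideal.mem_span_singleton_self _)).symm
  · simp [hj]

theorem eval_aeval_update (x : σ → R) :
    eval x (aeval (Function.update X i (C a)) p) = eval (Function.update x i a) p := by
  rw [eval_aeval]
  congr 2
  funext j
  rcases eq_or_ne j i with rfl | hj <;> simp [*]

variable [Nontrivial R]

theorem degreeOf_aeval_update_self : degreeOf i (aeval (Function.update X i (C a)) p) = 0 := by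
  by_contra h
  have h := mem_vars_iff_degreeOf_ne_zero.mpr h
  rw [aeval_eq_bind₁] at h
  obtain ⟨j, -, hj⟩ := Finset.mem_biUnion.mp (vars_bind₁ _ p h)
  rcases eq_or_ne j i with rfl | hji
  · simp at hj
  · rw [Function.update_of_ne hji, vars_X, Finset.mem_singleton] at hj
    exact hji hj.symm

theorem totalDegree_aeval_update_le :
    (aeval (Function.update X i (C a)) p).totalDegree ≤ p.totalDegree := by
  refine totalDegree_aeval_le (fun j => ?_) p
  rcases eq_or_ne j i with rfl | hj
  · simp
  · simp [hj, totalDegree_X]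

end Restriction

section Staircase

variable {R : Type*} [CommRing R] [IsDomain R]

theorem X_sub_C_dvd_of_eval_eq_zero {n : ℕ} {g : MvPolynomial (Fin 2) R}
    (hg : g.totalDegree ≤ n) {a : R} {z : ℕ → R} (hz : Set.InjOn z (Set.Iic n))
    (hv : ∀ j ≤ n, eval ![a, z j] g = 0) :
    X 0 - C a ∣ g := by
  classical
  -- on the line `x₀ = a`, `g` becomes a polynomial in `x₁` alone with `n + 1` roots
  have hs : aeval (Function.update X 0 (C a)) g = 0 := by
    refine eq_zero_of_eval_zero_at_prod_finset _ ![{a}, (Finset.Iic n).image z]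
      (Fin.forall_fin_two.mpr ⟨?_, ?_⟩) fun x hx => ?_
    · rw [degreeOf_aeval_update_self]
      simp
    · rw [Matrix.cons_val_one, Matrix.cons_val_zero,
        Finset.card_image_of_injOn (by rwa [Finset.coe_Iic]), Nat.card_Iic]
      exact Nat.lt_succ_of_le
        (((degreeOf_le_totalDegree _ _).trans (totalDegree_aeval_update_le 0 a g)).trans hg)
    · obtain ⟨j, hj, hxj⟩ := Finset.mem_image.mp (hx 1)
      have hx : Function.update x 0 a = ![a, z j] := by
        funext i
        fin_cases i <;> simp [hxj]
      rw [eval_aeval_update, hx, hv j (Finset.mem_Iic.mp hj)]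
  simpa only [hs, sub_zero] using X_sub_C_dvd_sub_aeval_update 0 a g

theorem eq_zero_of_eval_staircase {n : ℕ} {g : MvPolynomial (Fin 2) R} (hg : g.totalDegree < n)
    {A : ℕ → R} (hA : Set.InjOn A (Set.Iio n)) {z : ℕ → ℕ → R}
    (hz : ∀ k < n, Set.InjOn (z k) (Set.Iic k)) (hv : ∀ k < n, ∀ j ≤ k, eval ![A k, z k j] g = 0) :
    g = 0 := by
  induction n generalizing g with
  | zero => omega
  | succ n ih =>
    obtain ⟨h, rfl⟩ := X_sub_C_dvd_of_eval_eq_zero (Nat.lt_succ_iff.mp hg)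
      (hz n n.lt_succ_self) (hv n n.lt_succ_self)
    rcases eq_or_ne h 0 with rfl | hh
    · exact mul_zero _
    have hX : (X 0 - C (A n) : MvPolynomial (Fin 2) R) ≠ 0 := fun h0 => by
      simpa [h0] using totalDegree_X_sub_C (0 : Fin 2) (A n)
    rw [totalDegree_mul_of_isDomain hX hh, totalDegree_X_sub_C] at hg
    refine absurd (ih (by omega) (hA.mono (Set.Iio_subset_Iio n.le_succ))
      (fun k hk => hz k (hk.trans n.lt_succ_self)) fun k hk j hj => ?_) hh
    have hAk : A k - A n ≠ 0 :=
      sub_ne_zero.mpr fun h => hk.ne (hA (hk.trans n.lt_succ_self) n.lt_succ_self h)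
    simpa [hAk] using hv k (hk.trans n.lt_succ_self) j hj

end Staircase

theorem IsHomogeneous.eval_smul {σ R : Type*} [CommSemiring R] {G : MvPolynomial σ R} {e : ℕ}
    (hG : G.IsHomogeneous e) (c : R) (x : σ → R) : eval (c • x) G = c ^ e * eval x G := by
  conv_lhs => rw [G.as_sum]
  rw [map_sum, eval_eq, Finset.mul_sum]
  refine Finset.sum_congr rfl fun u hu => ?_
  have hdeg : ∑ i ∈ u.support, u i = e := by
    simpa [Finsupp.weight_apply, Finsupp.sum] using hG (mem_support_iff.mp hu)
  simp only [eval_monomial, Pi.smul_apply, smul_eq_mul, mul_pow, Finsupp.prod,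
    Finset.prod_mul_distrib, Finset.prod_pow_eq_pow_sum, hdeg]
  ring

theorem IsHomogeneous.eq_zero_of_eval_cons_one {K : Type*} [Field K] [Infinite K] {n e : ℕ}
    {G : MvPolynomial (Fin (n + 1)) K} (hG : G.IsHomogeneous e)
    (h : ∀ x : Fin n → K, eval (Fin.cons 1 x) G = 0) : G = 0 := by
  have hXG : X 0 * G = 0 := MvPolynomial.funext fun y => by
    rw [map_mul, eval_X, map_zero]
    rcases eq_or_ne (y 0) 0 with h0 | h0
    · rw [h0, zero_mul]
    have hy : y = y 0 • Fin.cons 1 fun i => y i.succ / y 0 := by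
      ext i
      cases i using Fin.cases <;> simp [mul_div_cancel₀ _ h0]
    rw [hy, hG.eval_smul, h, mul_zero, mul_zero]
  exact (mul_eq_zero.mp hXG).resolve_left (X_ne_zero _)

theorem IsHomogeneous.eq_zero_of_eval_staircase {K : Type*} [Field K] [Infinite K] {e n : ℕ}
    {G : MvPolynomial (Fin 3) K} (hG : G.IsHomogeneous e) (hen : e < n) {A : ℕ → K}
    (hA : Set.InjOn A (Set.Iio n)) {z : ℕ → ℕ → K} (hz : ∀ k < n, Set.InjOn (z k) (Set.Iic k))
    (hv : ∀ k < n, ∀ j ≤ k, eval ![1, A k, z k j] G = 0) : G = 0 := by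
  set g : MvPolynomial (Fin 2) K :=
    MvPolynomial.aeval (Fin.cons 1 X : Fin 3 → MvPolynomial (Fin 2) K) G
  have hg : ∀ x, eval x g = eval (Fin.cons 1 x) G := fun x => by
    rw [eval_aeval]
    congr 2
    funext i
    cases i using Fin.cases <;> simp
  have hdeg : g.totalDegree < n :=
    (totalDegree_aeval_le (fun i => by cases i using Fin.cases <;> simp [totalDegree_X]) G
      ).trans_lt (hG.totalDegree_le.trans_lt hen)
  have : g = 0 :=
    MvPolynomial.eq_zero_of_eval_staircase hdeg hA hz fun k hk j hj => (hg _).trans (hv k hk j hj)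
  exact hG.eq_zero_of_eval_cons_one fun x => by rw [← hg, this, map_zero]

section Fermat

variable (σ R : Type*) [Fintype σ]

noncomputable def fermat [CommSemiring R] (d : ℕ) : MvPolynomial σ R := ∑ i, X i ^ d

variable {σ R}

theorem isHomogeneous_fermat [CommSemiring R] (d : ℕ) : (fermat σ R d).IsHomogeneous d :=
  IsHomogeneous.sum _ _ _ fun i _ => isHomogeneous_X_pow i d

theorem eval_fermat [CommSemiring R] (d : ℕ) (x : σ → R) :
    eval x (fermat σ R d) = ∑ i, x i ^ d := by
  simp [fermat]

theorem pderiv_fermat [CommSemiring R] [DecidableEq σ] (d : ℕ) (i : σ) :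
    pderiv i (fermat σ R d) = (d : MvPolynomial σ R) * X i ^ (d - 1) := by
  simp [fermat, pderiv_X, Pi.single_apply]

theorem eq_zero_of_eval_pderiv_fermat [CommRing R] [IsDomain R] [CharZero R] {d : ℕ}
    (hd : d ≠ 0) (w : σ → R) (hw : ∀ i, eval w (pderiv i (fermat σ R d)) = 0) : w = 0 := by
  classical
  funext i
  have := hw i
  rw [pderiv_fermat, map_mul, map_natCast, map_pow, eval_X] at this
  exact (pow_eq_zero_iff'.mp ((mul_eq_zero.mp this).resolve_left (Nat.cast_ne_zero.mpr hd))).1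

end Fermat

end MvPolynomial

open Complex in
noncomputable def fermatRoot (d k : ℕ) : ℂ := (-(1 + (k : ℂ) ^ d)) ^ ((d : ℂ)⁻¹)

open Complex in
noncomputable def fermatPoint (d k j : ℕ) : Fin 3 → ℂ :=
  ![1, k, exp (2 * Real.pi * I / d) ^ j * fermatRoot d k]

theorem fermatRoot_pow {d : ℕ} (hd : d ≠ 0) (k : ℕ) :
    fermatRoot d k ^ d = -(1 + (k : ℂ) ^ d) :=
  Complex.cpow_nat_inv_pow _ hd

theorem fermatRoot_ne_zero {d : ℕ} (hd : d ≠ 0) (k : ℕ) : fermatRoot d k ≠ 0 := by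
  intro h
  have hpow := fermatRoot_pow hd k
  rw [h, zero_pow hd, eq_comm, neg_eq_zero] at hpow
  have : 1 + k ^ d = 0 := by exact_mod_cast hpow
  omega

theorem injOn_fermatPoint_apply_two {d : ℕ} (hd : d ≠ 0) (k : ℕ) :
    Set.InjOn (fun j => fermatPoint d k j 2) (Set.Iio d) := fun _ hj _ hj' h =>
  (Complex.isPrimitiveRoot_exp d hd).pow_inj hj hj' (mul_right_cancel₀ (fermatRoot_ne_zero hd k) h)

theorem eval_fermat_fermatPoint {d : ℕ} (hd : d ≠ 0) (k j : ℕ) :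
    eval (fermatPoint d k j) (fermat (Fin 3) ℂ d) = 0 := by
  have hζ : (Complex.exp (2 * Real.pi * Complex.I / d) ^ j) ^ d = 1 := by
    rw [pow_right_comm, (Complex.isPrimitiveRoot_exp d hd).pow_eq_one, one_pow]
  rw [eval_fermat, Fin.sum_univ_three]
  simp only [fermatPoint, Matrix.cons_val_zero, Matrix.cons_val_one, Matrix.cons_val_two,
    Matrix.head_cons, Matrix.tail_cons, mul_pow, hζ, fermatRoot_pow hd]
  ring

abbrev StaircaseIndex (d m : ℕ) : Type :=
  Σ k : Fin (d + 1), Fin (if (k : ℕ) < d then k + 1 else m)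

theorem card_staircaseIndex (d m : ℕ) :
    Fintype.card (StaircaseIndex d m) = (d + 1) * d / 2 + m := by
  rw [Fintype.card_sigma, Fin.sum_univ_castSucc]
  simp only [Fintype.card_fin, Fin.val_castSucc, Fin.is_lt, if_true, Fin.val_last, lt_irrefl,
    if_false]
  rw [Fin.sum_univ_eq_sum_range (· + 1),
    ← (Finset.sum_range_succ' (fun i => i) d).trans (add_zero _), Finset.sum_range_id]
  simp

theorem injective_fermatPoint_staircaseIndex {d m : ℕ} (hd : d ≠ 0) (hm : m ≤ d) :
    Function.Injective fun x : StaircaseIndex d m => fermatPoint d x.1 x.2 := by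
  rintro ⟨k, j⟩ ⟨k', j'⟩ h
  obtain rfl : k = k' := Fin.ext (by simpa [fermatPoint] using congrFun h 1)
  have hlt : ∀ i : Fin (if (k : ℕ) < d then k + 1 else m), (i : ℕ) < d :=
    fun i => i.2.trans_le (by split_ifs <;> omega)
  obtain rfl : j = j' := Fin.ext (injOn_fermatPoint_apply_two hd k (hlt j) (hlt j') (congrFun h 2))
  rfl

theorem ne_smul_of_injective_of_apply_zero_eq_one {ι R : Type*} [Monoid R] {n : ℕ}
    {v : ι → Fin (n + 1) → R} (hv : Function.Injective v) (h0 : ∀ i, v i 0 = 1) {i j : ι}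
    (hij : i ≠ j) (c : R) : v i ≠ c • v j := by
  intro h
  have hc : c = 1 := by simpa [h0] using (congrFun h 0).symm
  exact hij (hv (by simpa [hc] using h))

/-- For `d > 1` and `(d+1)d/2 ≤ r < (d+2)(d+1)/2`, there exist `r` nonzero, pairwise
non-proportional vectors in `ℂ³` and a homogeneous polynomial `F` of degree `d` such that
(i) `F` vanishes at all the vectors; (ii) the only common zero of the partial derivatives of
`F` is the origin (`F` defines a smooth plane curve); (iii) no nonzero homogeneous polynomial
of degree `d - 1` vanishes at all the vectors. -/
theorem stmt_9 (d r : ℕ) (hd : 1 < d) (hr₁ : (d + 1) * d / 2 ≤ r)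
    (hr₂ : r < (d + 2) * (d + 1) / 2) :
    ∃ v : Fin r → (Fin 3 → ℂ), ∃ F : MvPolynomial (Fin 3) ℂ,
      (∀ i, v i ≠ 0) ∧
      (∀ i j, i ≠ j → ∀ c : ℂ, v i ≠ c • v j) ∧
      F.IsHomogeneous d ∧
      (∀ i, MvPolynomial.eval (v i) F = 0) ∧
      (∀ w : Fin 3 → ℂ, (∀ m : Fin 3, MvPolynomial.eval w (MvPolynomial.pderiv m F) = 0) →
        w = 0) ∧
      (∀ G : MvPolynomial (Fin 3) ℂ, G.IsHomogeneous (d - 1) →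
        (∀ i, MvPolynomial.eval (v i) G = 0) → G = 0) := by
  have hd0 : d ≠ 0 := by omega
  set m := r - (d + 1) * d / 2
  have hm : m ≤ d := by
    have : (d + 2) * (d + 1) / 2 = (d + 1) * d / 2 + (d + 1) := by
      rw [show (d + 2) * (d + 1) = (d + 1) * d + 2 * (d + 1) by ring,
        Nat.add_mul_div_left _ _ two_pos]
    omega
  let S : StaircaseIndex d m ≃ Fin r :=
    Fintype.equivFinOfCardEq ((card_staircaseIndex d m).trans (by omega))
  let v : Fin r → Fin 3 → ℂ := fun i => fermatPoint d (S.symm i).1 (S.symm i).2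
  have hv : Function.Injective v :=
    (injective_fermatPoint_staircaseIndex hd0 hm).comp S.symm.injective
  refine ⟨v, fermat (Fin 3) ℂ d, fun i h => one_ne_zero (congrFun h 0),
    fun i j hij => ne_smul_of_injective_of_apply_zero_eq_one hv (fun _ => rfl) hij,
    isHomogeneous_fermat d, fun i => eval_fermat_fermatPoint hd0 _ _,
    eq_zero_of_eval_pderiv_fermat hd0, fun G hG hGv => ?_⟩
  refine hG.eq_zero_of_eval_staircase (n := d) (by omega) Nat.cast_injective.injOn
    (fun k hk => (injOn_fermatPoint_apply_two hd0 k).mono (Set.Iic_subset_Iio.mpr hk))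
    fun k hk j hj => ?_
  let x : StaircaseIndex d m := ⟨⟨k, by omega⟩, ⟨j, by simp only [if_pos hk]; omega⟩⟩
  have hx := hGv (S x)
  rwa [show v (S x) = fermatPoint d k j from
    congrArg (fun y : StaircaseIndex d m => fermatPoint d y.1 y.2) (S.symm_apply_apply x)] at hx
end

section
/- Let r ≥ 2 and let A, B, a₁, …, a_r ∈ ℂ satisfy B·∏_{j=1}^{r}(A + a_j) ≠ 0. Let R = ℂ⟦x,y,z⟧ be the formal power series ring in three variables over ℂ, and let f = x·z − A·y·z + B·∏_{j=1}^{r}(x + a_j·y) ∈ R. Then there is a ring isomorphism R/(f) ≅ R/(x·z + y^r) between the quotients of R by the principal ideals generated by f and by x·z + y^r. -/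
/-!
After the shear `x ↦ x + A y` the series becomes `x z + B ∏ⱼ (x + (A + aⱼ) y)`. Modulo `x`
the product is `P yʳ` with `P = ∏ⱼ (A + aⱼ)`, so it equals `x G + P yʳ` for a form `G(x, y)`
of degree `r - 1`; the series is therefore `x (z + B G) + B P yʳ`. The change of variables
`z ↦ B P z - B G` turns it into `B P (x z + yʳ)`, which generates the same ideal as `x z + yʳ`
because `B P ≠ 0`. Both changes of variables move a single variable by a unit multiple of
itself plus a polynomial in the others, so they are automorphisms of `ℂ⟦x,y,z⟧`.
-/

noncomputable section

theorem dvd_prod_add_sub_prod {ι T : Type*} [CommRing T] (s : Finset ι) (x : T) (t : ι → T) :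
    x ∣ ∏ k ∈ s, (x + t k) - ∏ k ∈ s, t k := by
  rw [← Ideal.mem_span_singleton, ← Ideal.Quotient.eq]
  simp [map_prod, Ideal.Quotient.mk_singleton_self]

namespace MvPolynomial

variable {σ R : Type*} [CommRing R]

theorem constantCoeff_coe (p : MvPolynomial σ R) :
    MvPowerSeries.constantCoeff (p : MvPowerSeries σ R) = constantCoeff p := by
  rw [← MvPowerSeries.coeff_zero_eq_constantCoeff_apply, coeff_coe, constantCoeff_eq]

theorem constantCoeff_eq_zero_of_isHomogeneous_X_mul {i : σ} {G : MvPolynomial σ R} {n : ℕ}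
    (hG : (X i * G).IsHomogeneous n) (hn : n ≠ 1) : constantCoeff G = 0 := by
  rw [constantCoeff_eq, ← coeff_X_mul 0 i, add_zero]
  exact hG.coeff_eq_zero (by simpa using hn.symm)

theorem isHomogeneous_prod_X_add_C_mul_X {ι : Type*} (s : Finset ι) (i j : σ) (c : ι → R) :
    (∏ k ∈ s, (X i + C (c k) * X j)).IsHomogeneous s.card := by
  simpa using IsHomogeneous.prod s _ (fun _ => 1)
    fun k _ => (isHomogeneous_X R i).add (isHomogeneous_C_mul_X (c k) j)

theorem exists_prod_X_add_C_mul_X_eq {ι : Type*} (s : Finset ι) (i j : σ) (c : ι → R)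
    (hs : s.card ≠ 1) :
    ∃ G ∈ supported R {i, j}, constantCoeff G = 0 ∧
      ∏ k ∈ s, (X i + C (c k) * X j) = X i * G + C (∏ k ∈ s, c k) * X j ^ s.card := by
  let S := supported R ({i, j} : Set σ)
  have hX : ∀ l ∈ ({i, j} : Set σ), X l ∈ S := fun l hl =>
    Algebra.subset_adjoin (Set.mem_image_of_mem X hl)
  obtain ⟨G, hG⟩ := dvd_prod_add_sub_prod s (⟨X i, hX i (by simp)⟩ : S)
    fun k => ⟨C (c k) * X j, mul_mem (S.algebraMap_mem _) (hX j (by simp))⟩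
  have hG' := congrArg S.val hG
  simp only [AddMemClass.mk_add_mk, Subalgebra.coe_val, AddSubgroupClass.coe_sub,
    SubmonoidClass.coe_finsetProd, MulMemClass.coe_mul] at hG'
  rw [Finset.prod_mul_distrib, Finset.prod_const, ← map_prod] at hG'
  refine ⟨G, G.2, constantCoeff_eq_zero_of_isHomogeneous_X_mul (i := i) ?_ hs, ?_⟩
  · rw [← hG']
    exact (isHomogeneous_prod_X_add_C_mul_X s i j c).sub (isHomogeneous_C_mul_X_pow _ _ _)
  · rw [← hG', sub_add_cancel]

end MvPolynomial

namespace MvPowerSeries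

variable {σ R : Type*} [CommRing R]

def substAlgEquiv {a b : σ → MvPowerSeries σ R} (ha : HasSubst a) (hb : HasSubst b)
    (hba : ∀ i, subst b (a i) = X i) (hab : ∀ i, subst a (b i) = X i) :
    MvPowerSeries σ R ≃ₐ[R] MvPowerSeries σ R :=
  AlgEquiv.ofAlgHom (substAlgHom ha) (substAlgHom hb)
    (AlgHom.ext fun f => by simp [subst_comp_subst_apply hb ha, hab, subst_self])
    (AlgHom.ext fun f => by simp [subst_comp_subst_apply ha hb, hba, subst_self])

theorem substAlgEquiv_apply {a b : σ → MvPowerSeries σ R} (ha : HasSubst a) (hb : HasSubst b)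
    (hba : ∀ i, subst b (a i) = X i) (hab : ∀ i, subst a (b i) = X i) (f : MvPowerSeries σ R) :
    substAlgEquiv ha hb hba hab f = subst a f := by
  simp [substAlgEquiv]

variable [DecidableEq σ] {i : σ}

theorem subst_update_coe_of_mem_supported {p : MvPolynomial σ R}
    (hp : p ∈ MvPolynomial.supported R {i}ᶜ) (t : MvPowerSeries σ R) :
    subst (Function.update X i t) (p : MvPowerSeries σ R) = p := by
  conv_rhs => rw [← id_eq (p : MvPowerSeries σ R), ← subst_self]
  rw [subst_coe, subst_coe]
  refine MvPolynomial.eval₂Hom_congr' rfl (fun j hj _ => ?_) rfl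
  have : j ≠ i := (MvPolynomial.mem_supported.mp hp hj :)
  simp [this]

def triangularSubst (i : σ) (u : R) (p : MvPolynomial σ R) : σ → MvPowerSeries σ R :=
  Function.update X i (C u * X i + (p : MvPowerSeries σ R))

@[simp]
theorem triangularSubst_self (i : σ) (u : R) (p : MvPolynomial σ R) :
    triangularSubst i u p i = C u * X i + (p : MvPowerSeries σ R) :=
  Function.update_self ..

@[simp]
theorem triangularSubst_of_ne {j : σ} (hj : j ≠ i) (u : R) (p : MvPolynomial σ R) :
    triangularSubst i u p j = X j :=
  Function.update_of_ne hj ..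

variable [Finite σ]

theorem hasSubst_triangularSubst (u : R) {p : MvPolynomial σ R} (hp₀ : p.constantCoeff = 0) :
    HasSubst (triangularSubst i u p) :=
  hasSubst_of_constantCoeff_zero fun j => by
    rcases eq_or_ne j i with rfl | hj <;> simp [MvPolynomial.constantCoeff_coe, *]

theorem subst_triangularSubst_self {u v : R} {p q : MvPolynomial σ R}
    (hp : p ∈ MvPolynomial.supported R {i}ᶜ) (hq₀ : q.constantCoeff = 0) :
    subst (triangularSubst i v q) (triangularSubst i u p i) =
      triangularSubst i (u * v) (MvPolynomial.C u * q + p) i := by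
  have hs := hasSubst_triangularSubst (i := i) v hq₀
  simp only [triangularSubst_self, MvPolynomial.coe_add, MvPolynomial.coe_mul,
    MvPolynomial.coe_C]
  rw [subst_add hs, subst_mul hs, subst_C, subst_X hs, triangularSubst_self, triangularSubst,
    subst_update_coe_of_mem_supported hp, map_mul]
  ring

def triangularAlgEquiv (i : σ) (u : Rˣ) (p : MvPolynomial σ R)
    (hp : p ∈ MvPolynomial.supported R {i}ᶜ) (hp₀ : p.constantCoeff = 0) :
    MvPowerSeries σ R ≃ₐ[R] MvPowerSeries σ R :=
  have hp' : -(MvPolynomial.C (↑u⁻¹ : R) * p) ∈ MvPolynomial.supported R {i}ᶜ :=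
    neg_mem (mul_mem (Subalgebra.algebraMap_mem _ _) hp)
  have hp₀' : (-(MvPolynomial.C (↑u⁻¹ : R) * p)).constantCoeff = 0 := by simp [hp₀]
  substAlgEquiv (hasSubst_triangularSubst (i := i) (u : R) hp₀)
    (hasSubst_triangularSubst (i := i) ↑u⁻¹ hp₀')
    (fun j => by
      rcases eq_or_ne j i with rfl | hj
      · rw [subst_triangularSubst_self hp hp₀', Units.mul_inv, mul_neg, ← mul_assoc,
          ← map_mul, Units.mul_inv, map_one, one_mul, neg_add_cancel]
        simp
      · rw [triangularSubst_of_ne hj, subst_X (hasSubst_triangularSubst _ hp₀'),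
          triangularSubst_of_ne hj])
    (fun j => by
      rcases eq_or_ne j i with rfl | hj
      · rw [subst_triangularSubst_self hp' hp₀, Units.inv_mul, add_neg_cancel]
        simp
      · rw [triangularSubst_of_ne hj, subst_X (hasSubst_triangularSubst _ hp₀),
          triangularSubst_of_ne hj])

variable {u : Rˣ} {p : MvPolynomial σ R} {hp : p ∈ MvPolynomial.supported R {i}ᶜ}
  {hp₀ : p.constantCoeff = 0}

theorem triangularAlgEquiv_apply (f : MvPowerSeries σ R) :
    triangularAlgEquiv i u p hp hp₀ f = subst (triangularSubst i (u : R) p) f := by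
  rw [triangularAlgEquiv, substAlgEquiv_apply]

theorem triangularAlgEquiv_X_self :
    triangularAlgEquiv i u p hp hp₀ (X i) = C (u : R) * X i + (p : MvPowerSeries σ R) := by
  rw [triangularAlgEquiv_apply, subst_X (hasSubst_triangularSubst _ hp₀), triangularSubst_self]

theorem triangularAlgEquiv_X_of_ne {j : σ} (hj : j ≠ i) :
    triangularAlgEquiv i u p hp hp₀ (X j) = X j := by
  rw [triangularAlgEquiv_apply, subst_X (hasSubst_triangularSubst _ hp₀),
    triangularSubst_of_ne hj]

theorem triangularAlgEquiv_C (c : R) : triangularAlgEquiv i u p hp hp₀ (C c) = C c := by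
  rw [c_eq_algebraMap, AlgEquiv.commutes]

theorem triangularAlgEquiv_coe_of_mem_supported {q : MvPolynomial σ R}
    (hq : q ∈ MvPolynomial.supported R {i}ᶜ) :
    triangularAlgEquiv i u p hp hp₀ q = q := by
  rw [triangularAlgEquiv_apply, triangularSubst, subst_update_coe_of_mem_supported hq]

theorem exists_algEquiv_map_pinwheel_eq {r : ℕ} (hr : r ≠ 1) (A B : R) (a : Fin r → R)
    (hu : IsUnit (B * ∏ j, (A + a j))) :
    ∃ E : MvPowerSeries (Fin 3) R ≃ₐ[R] MvPowerSeries (Fin 3) R,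
      E (X 0 * X 2 - C A * X 1 * X 2 + C B * ∏ j, (X 0 + C (a j) * X 1)) =
        C (B * ∏ j, (A + a j)) * (X 0 * X 2 + X 1 ^ r) := by
  obtain ⟨G, hG, hG₀, hprod⟩ := MvPolynomial.exists_prod_X_add_C_mul_X_eq Finset.univ
    (0 : Fin 3) 1 (fun j => A + a j) (by rwa [Finset.card_univ, Fintype.card_fin])
  set P := ∏ j, (A + a j)
  replace hprod := congrArg MvPolynomial.coeToMvPowerSeries.ringHom hprod
  simp only [MvPolynomial.C_add, map_prod, MvPolynomial.coeToMvPowerSeries.ringHom_apply,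
    MvPolynomial.coe_add, MvPolynomial.coe_X, MvPolynomial.coe_mul, MvPolynomial.coe_C,
    Finset.card_univ, Fintype.card_fin, MvPolynomial.coe_pow] at hprod
  have hG₂ : G ∈ MvPolynomial.supported R {2}ᶜ :=
    MvPolynomial.supported_mono (by rintro _ (rfl | rfl) <;> decide) hG
  let T₁ := triangularAlgEquiv (0 : Fin 3) 1 (MvPolynomial.C A * MvPolynomial.X 1)
    (mul_mem (Subalgebra.algebraMap_mem _ _) (Algebra.subset_adjoin ⟨1, by decide, rfl⟩))
    (by simp)
  let T₂ := triangularAlgEquiv (2 : Fin 3) hu.unit (MvPolynomial.C (-B) * G)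
    (mul_mem (Subalgebra.algebraMap_mem _ _) hG₂) (by simp [hG₀])
  refine ⟨T₁.trans T₂, ?_⟩
  have hT₁ : T₁ (X 0 * X 2 - C A * X 1 * X 2 + C B * ∏ j, (X 0 + C (a j) * X 1)) =
      X 0 * X 2 + C B * (X 0 * (G : MvPowerSeries (Fin 3) R) + C P * X 1 ^ r) := by
    simp only [T₁, map_add, map_sub, map_mul, map_prod, triangularAlgEquiv_X_self, Units.val_one,
      map_one, one_mul, MvPolynomial.coe_mul, MvPolynomial.coe_C, MvPolynomial.coe_X,
      triangularAlgEquiv_X_of_ne (show (1 : Fin 3) ≠ 0 by decide),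
      triangularAlgEquiv_X_of_ne (show (2 : Fin 3) ≠ 0 by decide), triangularAlgEquiv_C]
    rw [Finset.prod_congr rfl fun j _ => by rw [add_assoc, ← add_mul], hprod]
    ring
  rw [AlgEquiv.trans_apply, hT₁]
  simp only [T₂, map_add, map_mul, map_pow, triangularAlgEquiv_X_self, IsUnit.unit_spec,
    triangularAlgEquiv_X_of_ne (show (0 : Fin 3) ≠ 2 by decide),
    triangularAlgEquiv_X_of_ne (show (1 : Fin 3) ≠ 2 by decide), triangularAlgEquiv_C,
    triangularAlgEquiv_coe_of_mem_supported hG₂, MvPolynomial.coe_mul, MvPolynomial.coe_C]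
  rw [map_neg]
  ring

end MvPowerSeries

end

open MvPowerSeries

/-- For `r ≥ 2` and `A, B, a₁, …, a_r ∈ ℂ` with `B ∏_j (A + a_j) ≠ 0`, setting
`f = xz − A yz + B ∏_j (x + a_j y)` in `R = ℂ⟦x,y,z⟧`, there is a ring isomorphism
`R/(f) ≅ R/(xz + y^r)` (the `A_{r−1}` singularity). -/
theorem stmt_11 (r : ℕ) (hr : 2 ≤ r) (A B : ℂ) (a : Fin r → ℂ)
    (hABa : B * ∏ j : Fin r, (A + a j) ≠ 0) :
    Nonempty
      ((MvPowerSeries (Fin 3) ℂ ⧸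
          Ideal.span {(X 0 : MvPowerSeries (Fin 3) ℂ) * X 2 -
            (C : ℂ →+* MvPowerSeries (Fin 3) ℂ) A * X 1 * X 2 +
            (C : ℂ →+* MvPowerSeries (Fin 3) ℂ) B * ∏ j : Fin r, (X 0 + (C : ℂ →+* MvPowerSeries (Fin 3) ℂ) (a j) * X 1)}) ≃+*
        (MvPowerSeries (Fin 3) ℂ ⧸
          Ideal.span {(X 0 : MvPowerSeries (Fin 3) ℂ) * X 2 + X 1 ^ r})) := by
  have hu := isUnit_iff_ne_zero.mpr hABa
  obtain ⟨E, hE⟩ := exists_algEquiv_map_pinwheel_eq (by omega) A B a hu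
  refine ⟨Ideal.quotientEquiv _ _ E.toRingEquiv ?_⟩
  rw [Ideal.map_span, Set.image_singleton]
  change _ = Ideal.span {E _}
  rw [hE, Ideal.span_singleton_mul_left_unit (hu.map C)]
end
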